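/- Let H be a complex Hilbert space and X : H → H a bounded linear operator. Set R = X*X + XX*. Then w(X)⁴ ≤ (1/16)‖R‖² + (1/4)w(X²)² + (1/8)w(X²R + RX²). -/

import Mathlib

/-
Fix a unit vector `x` and a unimodular `u` with `u ⟪X² x, x⟫ = |⟪X² x, x⟫|`; put `S = ū X²` and
`N = S + S*`. Buzano's inequality `|⟪a, e⟫⟪e, b⟫| ≤ (‖a‖‖b‖ + |⟪a, b⟫|) / 2` with `a = X x`,
`b = X* x` and AM-GM give
`4 |⟪X x, x⟫|² ≤ ⟪R x, x⟫ + 2 |⟪X² x, x⟫| = Re ⟪(R + N) x, x⟫ ≤ ‖(R + N) x‖`.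
Now `‖(R + N) x‖² = ‖R x‖² + 2 Re ⟪R x, N x⟫ + ‖N x‖²`, where `‖N x‖ ≤ w(N) ≤ 2 w(X²)` since `N`
is self-adjoint, and `Re ⟪R x, N x⟫ = Re ⟪(S R + R S) x, x⟫ ≤ w(X² R + R X²)`.
-/

noncomputable def numRadius {H : Type*} [NormedAddCommGroup H] [InnerProductSpace ℂ H]
    (T : H →L[ℂ] H) : ℝ :=
  sSup {r : ℝ | ∃ x : H, ‖x‖ = 1 ∧ r = ‖(inner ℂ (T x) x : ℂ)‖}

open ContinuousLinearMap ComplexConjugate RCLike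
open scoped InnerProductSpace

section Buzano

variable {𝕜 E : Type*} [RCLike 𝕜] [NormedAddCommGroup E] [InnerProductSpace 𝕜 E]

theorem norm_inner_mul_inner_le {e : E} (he : ‖e‖ = 1) (a b : E) :
    ‖⟪a, e⟫_𝕜 * ⟪e, b⟫_𝕜‖ ≤ (‖a‖ * ‖b‖ + ‖⟪a, b⟫_𝕜‖) / 2 := by
  -- `q` is the reflection of `a` in the line `𝕜 e`
  set q : E := (2 * ⟪e, a⟫_𝕜) • e - a
  have hee : ⟪e, e⟫_𝕜 = 1 := by rw [inner_self_eq_norm_sq_to_K, he]; norm_num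
  have hq : ‖q‖ = ‖a‖ := by
    have : ⟪q, q⟫_𝕜 = ⟪a, a⟫_𝕜 := by
      simp only [q, inner_sub_left, inner_sub_right, inner_smul_left, inner_smul_right,
        inner_conj_symm, map_mul, map_ofNat, hee]
      ring
    rw [inner_self_eq_norm_sq_to_K, inner_self_eq_norm_sq_to_K] at this
    exact_mod_cast (pow_left_inj₀ (norm_nonneg q) (norm_nonneg a) two_ne_zero).mp
      (by exact_mod_cast this)
  have hsum : ⟪a, e⟫_𝕜 * ⟪e, b⟫_𝕜 = (⟪q, b⟫_𝕜 + ⟪a, b⟫_𝕜) / 2 := by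
    simp only [q, inner_sub_left, inner_smul_left, map_mul, map_ofNat, inner_conj_symm]
    ring
  calc ‖⟪a, e⟫_𝕜 * ⟪e, b⟫_𝕜‖ = ‖⟪q, b⟫_𝕜 + ⟪a, b⟫_𝕜‖ / 2 := by rw [hsum, norm_div]; norm_num
    _ ≤ (‖q‖ * ‖b‖ + ‖⟪a, b⟫_𝕜‖) / 2 := by grw [norm_add_le, norm_inner_le_norm]
    _ = (‖a‖ * ‖b‖ + ‖⟪a, b⟫_𝕜‖) / 2 := by rw [hq]

end Buzano

section NumRadius

variable {H : Type*} [NormedAddCommGroup H] [InnerProductSpace ℂ H]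

theorem numRadius_nonneg (T : H →L[ℂ] H) : 0 ≤ numRadius T :=
  Real.sSup_nonneg (by rintro r ⟨x, -, rfl⟩; positivity)

theorem norm_inner_le_numRadius (T : H →L[ℂ] H) {x : H} (hx : ‖x‖ = 1) :
    ‖⟪T x, x⟫_ℂ‖ ≤ numRadius T := by
  refine le_csSup ⟨‖T‖, ?_⟩ ⟨x, hx, rfl⟩
  rintro r ⟨y, hy, rfl⟩
  calc ‖⟪T y, y⟫_ℂ‖ ≤ ‖T y‖ * ‖y‖ := norm_inner_le_norm _ _
    _ ≤ ‖T‖ := by simpa [hy] using T.le_opNorm y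

theorem norm_inner_le_numRadius_mul_sq (T : H →L[ℂ] H) (x : H) :
    ‖⟪T x, x⟫_ℂ‖ ≤ numRadius T * ‖x‖ ^ 2 := by
  rcases eq_or_ne x 0 with rfl | hx
  · simp
  have hu := norm_inner_le_numRadius T (norm_smul_inv_norm (𝕜 := ℂ) hx)
  rw [map_smul, inner_smul_left, inner_smul_right, norm_mul, norm_mul, RCLike.norm_conj,
    norm_inv, norm_algebraMap', norm_norm, ← mul_assoc, ← sq, ← le_div_iff₀' (by positivity),
    div_eq_mul_inv, inv_pow, inv_inv] at hu
  linarith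

theorem numRadius_le_of_forall {T : H →L[ℂ] H} {c : ℝ} (hc : 0 ≤ c)
    (h : ∀ x : H, ‖x‖ = 1 → ‖⟪T x, x⟫_ℂ‖ ≤ c) : numRadius T ≤ c :=
  Real.sSup_le (by rintro r ⟨x, hx, rfl⟩; exact h x hx) hc

theorem numRadius_pow_le_of_forall {T : H →L[ℂ] H} {n : ℕ} (hn : n ≠ 0) {B : ℝ} (hB : 0 ≤ B)
    (h : ∀ x : H, ‖x‖ = 1 → ‖⟪T x, x⟫_ℂ‖ ^ n ≤ B) : numRadius T ^ n ≤ B := by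
  have hroot : 0 ≤ B ^ (n⁻¹ : ℝ) := Real.rpow_nonneg hB _
  have hle : numRadius T ≤ B ^ (n⁻¹ : ℝ) := numRadius_le_of_forall hroot fun x hx ↦
    (pow_le_pow_iff_left₀ (norm_nonneg _) hroot hn).mp
      ((h x hx).trans_eq (Real.rpow_inv_natCast_pow hB hn).symm)
  calc numRadius T ^ n ≤ (B ^ (n⁻¹ : ℝ)) ^ n := by gcongr; exact numRadius_nonneg T
    _ = B := Real.rpow_inv_natCast_pow hB hn

theorem numRadius_add_le (S T : H →L[ℂ] H) : numRadius (S + T) ≤ numRadius S + numRadius T :=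
  numRadius_le_of_forall (add_nonneg (numRadius_nonneg S) (numRadius_nonneg T)) fun x hx ↦ by
    rw [add_apply, inner_add_left]
    exact (norm_add_le _ _).trans
      (add_le_add (norm_inner_le_numRadius S hx) (norm_inner_le_numRadius T hx))

theorem numRadius_smul_le (a : ℂ) (T : H →L[ℂ] H) : numRadius (a • T) ≤ ‖a‖ * numRadius T :=
  numRadius_le_of_forall (mul_nonneg (norm_nonneg a) (numRadius_nonneg T)) fun x hx ↦ by
    rw [smul_apply, inner_smul_left, norm_mul, RCLike.norm_conj]
    exact mul_le_mul_of_nonneg_left (norm_inner_le_numRadius T hx) (norm_nonneg a)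

theorem norm_le_numRadius_of_isSymmetric {T : H →L[ℂ] H} (hT : (T : H →ₗ[ℂ] H).IsSymmetric) :
    ‖T‖ ≤ numRadius T := by
  rw [T.norm_eq_iSup_rayleighQuotient hT]
  refine ciSup_le fun x ↦ ?_
  rcases eq_or_ne x 0 with rfl | hx
  · simpa using numRadius_nonneg T
  rw [rayleighQuotient, reApplyInnerSelf_apply, abs_div, abs_sq, div_le_iff₀ (by positivity)]
  exact (abs_re_le_norm _).trans (norm_inner_le_numRadius_mul_sq T x)

variable [CompleteSpace H]

theorem numRadius_adjoint (T : H →L[ℂ] H) : numRadius (adjoint T) = numRadius T := by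
  simp only [numRadius, adjoint_inner_left, ← inner_conj_symm (T _), RCLike.norm_conj]

theorem numRadius_add_adjoint_le (T : H →L[ℂ] H) : numRadius (T + adjoint T) ≤ 2 * numRadius T :=
  (numRadius_add_le T (adjoint T)).trans_eq (by rw [numRadius_adjoint, two_mul])

end NumRadius

section Operators

variable {H : Type*} [NormedAddCommGroup H] [InnerProductSpace ℂ H] [CompleteSpace H]

theorem norm_inner_apply_self_sq_le (X : H →L[ℂ] H) {x : H} (hx : ‖x‖ = 1) :
    4 * ‖⟪X x, x⟫_ℂ‖ ^ 2 ≤ ‖X x‖ ^ 2 + ‖adjoint X x‖ ^ 2 + 2 * ‖⟪(X ∘L X) x, x⟫_ℂ‖ := by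
  have hbuz := norm_inner_mul_inner_le (𝕜 := ℂ) hx (X x) (adjoint X x)
  rw [adjoint_inner_right, adjoint_inner_right, norm_mul, ← sq] at hbuz
  rw [comp_apply]
  nlinarith [sq_nonneg (‖X x‖ - ‖adjoint X x‖)]

theorem re_inner_adjoint_comp_add_comp_adjoint_apply (X : H →L[ℂ] H) (x : H) :
    re ⟪(adjoint X ∘L X + X ∘L adjoint X) x, x⟫_ℂ = ‖X x‖ ^ 2 + ‖adjoint X x‖ ^ 2 := by
  rw [add_apply, inner_add_left, map_add, comp_apply, comp_apply, adjoint_inner_left,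
    ← adjoint_inner_right X (adjoint X x), inner_self_eq_norm_sq, inner_self_eq_norm_sq]

theorem re_inner_add_adjoint_apply_self (S : H →L[ℂ] H) (x : H) :
    re ⟪(S + adjoint S) x, x⟫_ℂ = 2 * re ⟪S x, x⟫_ℂ := by
  rw [add_apply, inner_add_left, map_add, adjoint_inner_left, ← inner_conj_symm, conj_re, two_mul]

theorem re_inner_apply_add_adjoint_apply {R : H →L[ℂ] H} (hR : IsSelfAdjoint R) (S : H →L[ℂ] H)
    (x : H) : re ⟪R x, (S + adjoint S) x⟫_ℂ = re ⟪(S ∘L R + R ∘L S) x, x⟫_ℂ := by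
  have hRS : ⟪R x, S x⟫_ℂ = conj ⟪R (S x), x⟫_ℂ := by
    rw [inner_conj_symm]; exact hR.isSymmetric x (S x)
  rw [add_apply, inner_add_right, map_add, adjoint_inner_right, hRS, conj_re, add_apply,
    inner_add_left, map_add, comp_apply, comp_apply, add_comm]

theorem norm_inner_apply_self_pow_four_le {X R : H →L[ℂ] H}
    (hR : R = adjoint X ∘L X + X ∘L adjoint X) {x : H} (hx : ‖x‖ = 1) :
    ‖⟪X x, x⟫_ℂ‖ ^ 4 ≤ (1 / 16 : ℝ) * ‖R‖ ^ 2 + (1 / 4 : ℝ) * numRadius (X ∘L X) ^ 2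
      + (1 / 8 : ℝ) * numRadius ((X ∘L X) ∘L R + R ∘L (X ∘L X)) := by
  set C := (X ∘L X) ∘L R + R ∘L (X ∘L X)
  have hRsa : IsSelfAdjoint R := by
    simp only [hR, isSelfAdjoint_iff', map_add, adjoint_comp, adjoint_adjoint, add_comm]
  obtain ⟨u, hu, hux⟩ := Complex.exists_norm_eq_mul_self ⟪(X ∘L X) x, x⟫_ℂ
  set S := conj u • (X ∘L X)
  set N := S + adjoint S
  have hSx : re ⟪S x, x⟫_ℂ = ‖⟪(X ∘L X) x, x⟫_ℂ‖ := by
    rw [smul_apply, inner_smul_left, conj_conj, ← hux, re_to_complex, Complex.ofReal_re]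
  have hSC : S ∘L R + R ∘L S = conj u • C := by
    simp only [S, C, smul_comp, comp_smul, smul_add]
  have hNsa : IsSelfAdjoint N := IsSelfAdjoint.add_star_self S
  have hNx : ‖N x‖ ≤ 2 * numRadius (X ∘L X) :=
    calc ‖N x‖ ≤ ‖N‖ := by simpa [hx] using N.le_opNorm x
      _ ≤ numRadius N := norm_le_numRadius_of_isSymmetric hNsa.isSymmetric
      _ ≤ 2 * numRadius S := numRadius_add_adjoint_le S
      _ ≤ 2 * numRadius (X ∘L X) := by
        grw [numRadius_smul_le, RCLike.norm_conj, hu, one_mul]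
  have hcross : re ⟪R x, N x⟫_ℂ ≤ numRadius C :=
    calc re ⟪R x, N x⟫_ℂ = re ⟪(conj u • C) x, x⟫_ℂ := by
          rw [re_inner_apply_add_adjoint_apply hRsa, hSC]
      _ ≤ numRadius (conj u • C) := (re_le_norm _).trans (norm_inner_le_numRadius _ hx)
      _ ≤ numRadius C := by grw [numRadius_smul_le, RCLike.norm_conj, hu, one_mul]
  have hlower : 4 * ‖⟪X x, x⟫_ℂ‖ ^ 2 ≤ ‖(R + N) x‖ :=
    calc 4 * ‖⟪X x, x⟫_ℂ‖ ^ 2 ≤ re ⟪(R + N) x, x⟫_ℂ := by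
          rw [add_apply, inner_add_left, map_add, hR, re_inner_adjoint_comp_add_comp_adjoint_apply,
            re_inner_add_adjoint_apply_self, hSx]
          exact norm_inner_apply_self_sq_le X hx
      _ ≤ ‖(R + N) x‖ := by
          grw [re_le_norm, norm_inner_le_norm (𝕜 := ℂ), hx, mul_one]
  have hupper : ‖(R + N) x‖ ^ 2 ≤ ‖R‖ ^ 2 + 2 * numRadius C + (2 * numRadius (X ∘L X)) ^ 2 := by
    rw [add_apply, norm_add_sq (𝕜 := ℂ)]
    have hRx : ‖R x‖ ≤ ‖R‖ := by simpa [hx] using R.le_opNorm x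
    gcongr
  nlinarith [sq_nonneg ‖⟪X x, x⟫_ℂ‖]

end Operators

theorem numRadius_pow_four_upper
    {H : Type*} [NormedAddCommGroup H] [InnerProductSpace ℂ H] [CompleteSpace H]
    (X : H →L[ℂ] H) (R : H →L[ℂ] H)
    (hR : R = (ContinuousLinearMap.adjoint X).comp X + X.comp (ContinuousLinearMap.adjoint X)) :
    (numRadius X) ^ 4 ≤ (1 / 16 : ℝ) * ‖R‖ ^ 2 + (1 / 4 : ℝ) * (numRadius (X.comp X)) ^ 2
      + (1 / 8 : ℝ) * numRadius ((X.comp X).comp R + R.comp (X.comp X)) := by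
  have hX2 := numRadius_nonneg (X.comp X)
  have hC := numRadius_nonneg ((X.comp X).comp R + R.comp (X.comp X))
  exact numRadius_pow_le_of_forall four_ne_zero (by positivity) fun x hx ↦
    norm_inner_apply_self_pow_four_le hR hx
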